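/- Let H be a Hopf algebra with bijective antipode, C a left H-module coalgebra, and M a right H-module and left H-comodule. If the identity m^{(0)} ⊗_H (h^{(2)} ⊗ m^{(-1)} h^{(1)}) = (hm)^{(0)} ⊗_H (1 ⊗ (hm)^{(-1)}) holds in M ⊗_H (H ⊗ H) for all m ∈ M, h ∈ H (where hm denotes mh written on the left for the right action, and H ⊗ H carries the diagonal left H-action), then M satisfies the right-left anti-Yetter-Drinfeld condition Δ_M(mh) = S(h^{(3)}) m^{(-1)} h^{(1)} ⊗ m^{(0)} h^{(2)}. -/

import Mathlib

/-!
The inverse `Φ(h ⊗ h') = h⁽¹⁾ ⊗ S(h⁽²⁾)h'` of the Galois map intertwines the diagonal action on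
`H ⊗ H` with left multiplication on the first factor. Hence `m ⊗ (h ⊗ h') ↦ S(h⁽²⁾)h' ⊗ m h⁽¹⁾`
vanishes on the balancing relations of `M ⊗_H (H ⊗ H)`. Applied to the hypothesis, it sends the
left side to `S(h⁽³⁾) m⁽⁻¹⁾ h⁽¹⁾ ⊗ m⁽⁰⁾ h⁽²⁾` and the right side to `Δ_M(mh)`.
-/

open TensorProduct

namespace HC

variable {k : Type} [Field k]
variable {H : Type} [Ring H] [Algebra k H]
variable {M : Type} [AddCommGroup M] [Module k M]

def IsRAct (act : H →ₗ[k] M →ₗ[k] M) : Prop :=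
  act 1 = LinearMap.id ∧ ∀ g h : H, act (g * h) = (act h) ∘ₗ (act g)

def IsLCoact (Δ : H →ₗ[k] H ⊗[k] H) (ε : H →ₗ[k] k)
    (coact : M →ₗ[k] H ⊗[k] M) : Prop :=
  ((TensorProduct.map Δ LinearMap.id) ∘ₗ coact =
    ((TensorProduct.assoc k H H M).symm.toLinearMap) ∘ₗ
      (TensorProduct.map LinearMap.id coact) ∘ₗ coact) ∧
  (∀ m : M, (TensorProduct.lid k M) ((TensorProduct.map ε LinearMap.id) (coact m)) = m)

def AYDrl (Δ : H →ₗ[k] H ⊗[k] H) (S : H →ₗ[k] H)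
    (act : H →ₗ[k] M →ₗ[k] M) (coact : M →ₗ[k] H ⊗[k] M) : Prop :=
  ∀ (h : H) (m : M) (s : Finset ℕ) (a b : ℕ → H)
    (t : ℕ → Finset ℕ) (c d : ℕ → ℕ → H)
    (u : Finset ℕ) (e : ℕ → H) (m0 : ℕ → M),
    Δ h = ∑ i ∈ s, a i ⊗ₜ b i →
    (∀ i ∈ s, Δ (b i) = ∑ j ∈ t i, c i j ⊗ₜ d i j) →
    coact m = ∑ l ∈ u, e l ⊗ₜ m0 l →
    coact (act h m) = ∑ i ∈ s, ∑ j ∈ t i, ∑ l ∈ u,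
      (S (d i j) * e l * a i) ⊗ₜ act (c i j) (m0 l)

/-- The diagonal left `H`-action on `H ⊗ H`, as a map
`g ⊗ (h ⊗ h') ↦ g⁽¹⁾h ⊗ g⁽²⁾h'`. -/
noncomputable def diagActU (Δ : H →ₗ[k] H ⊗[k] H) :
    H ⊗[k] (H ⊗[k] H) →ₗ[k] H ⊗[k] H :=
  (TensorProduct.map (LinearMap.mul' k H) (LinearMap.mul' k H)) ∘ₗ
    (TensorProduct.tensorTensorTensorComm k H H H H).toLinearMap ∘ₗ
    (TensorProduct.map Δ LinearMap.id)

/-- The balancing relations defining `M ⊗_H (H ⊗ H)` (right action on `M`,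
diagonal left action on `H ⊗ H`). -/
noncomputable def rel2 (Δ : H →ₗ[k] H ⊗[k] H) (actM : H →ₗ[k] M →ₗ[k] M) :
    Submodule k (M ⊗[k] (H ⊗[k] H)) :=
  Submodule.span k
    {z | ∃ (g : H) (m : M) (x : H ⊗[k] H),
      z = (actM g m) ⊗ₜ x - m ⊗ₜ (diagActU Δ (g ⊗ₜ x))}

end HC

open HC TensorProduct

open Coalgebra HopfAlgebra

theorem TensorProduct.exists_eq_sum_range_tmul {R M N : Type*} [CommSemiring R]
    [AddCommMonoid M] [Module R M] [AddCommMonoid N] [Module R N] (x : M ⊗[R] N) :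
    ∃ (n : ℕ) (m : ℕ → M) (y : ℕ → N), x = ∑ i ∈ Finset.range n, m i ⊗ₜ[R] y i := by
  induction x using TensorProduct.induction_on with
  | zero => exact ⟨0, 0, 0, by simp⟩
  | tmul a b => exact ⟨1, fun _ => a, fun _ => b, by simp⟩
  | add x x' hx hx' =>
    obtain ⟨n, m, y, rfl⟩ := hx
    obtain ⟨n', m', y', rfl⟩ := hx'
    refine ⟨n + n', fun i => if i < n then m i else m' (i - n),
      fun i => if i < n then y i else y' (i - n), ?_⟩
    rw [Finset.sum_range_add]
    congr 1
    · exact Finset.sum_congr rfl fun i hi => by simp [Finset.mem_range.mp hi]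
    · simp

namespace HopfAlgebra

variable {R A : Type*} [CommSemiring R] [Semiring A] [HopfAlgebra R A]

theorem sum_tmul_antipode_mul_eq {ι : Type*} {κ : ι → Type*} {g : A} (r : Repr R g ι)
    (r₁ : ∀ i, Repr R (r.left i) (κ i)) :
    ∑ i ∈ r.index, ∑ p ∈ (r₁ i).index,
      (r₁ i).left p ⊗ₜ[R] (antipode R ((r₁ i).right p) * r.right i) = g ⊗ₜ[R] (1 : A) := by
  have hcoassoc := congr((LinearMap.mul' R A ∘ₗ (antipode R).rTensor A).lTensor A
    $(sum_tmul_tmul_eq r r₁ fun i => ℛ R (r.right i)))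
  simp only [map_sum, LinearMap.lTensor_tmul, LinearMap.comp_apply, LinearMap.rTensor_tmul,
    LinearMap.mul'_apply, ← tmul_sum, sum_antipode_mul_eq_algebraMap_counit] at hcoassoc
  rw [hcoassoc]
  have hcounit := congr((Algebra.linearMap R A).lTensor A $(sum_tmul_counit_eq r))
  simpa only [map_sum, LinearMap.lTensor_tmul, Algebra.linearMap_apply, map_one] using hcounit

variable (R A) in
/-- The inverse of the Galois map `h ⊗ h' ↦ h⁽¹⁾ ⊗ h⁽²⁾h'`: the paper's `Φ`. -/
noncomputable def galoisInv : A ⊗[R] A →ₗ[R] A ⊗[R] A :=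
  (LinearMap.mul' R A ∘ₗ (antipode R).rTensor A).lTensor A ∘ₗ
    (TensorProduct.assoc R A A A).toLinearMap ∘ₗ (comul (R := R)).rTensor A

theorem galoisInv_tmul {ι : Type*} {g : A} (r : Repr R g ι) (g' : A) :
    galoisInv R A (g ⊗ₜ g') = ∑ i ∈ r.index, r.left i ⊗ₜ (antipode R (r.right i) * g') := by
  simp [galoisInv, ← r.eq, sum_tmul]

end HopfAlgebra

namespace HC

section Hopf

variable {k : Type} [Field k] {H : Type} [Ring H] [HopfAlgebra k H]

theorem diagActU_tmul {ι : Type*} {g : H} (r : Repr k g ι) (h h' : H) :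
    diagActU comul (g ⊗ₜ (h ⊗ₜ h')) = ∑ i ∈ r.index, (r.left i * h) ⊗ₜ[k] (r.right i * h') := by
  simp [diagActU, ← r.eq, sum_tmul]

theorem galoisInv_diagActU_tmul (g h h' : H) :
    galoisInv k H (diagActU comul (g ⊗ₜ (h ⊗ₜ h'))) =
      (LinearMap.mulLeft k g).rTensor H (galoisInv k H (h ⊗ₜ h')) := by
  let rg := ℛ k g
  let r₁ := fun i => ℛ k (rg.left i)
  let rh := ℛ k h
  calc galoisInv k H (diagActU comul (g ⊗ₜ (h ⊗ₜ h')))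
      = ∑ j ∈ rh.index, TensorProduct.map (LinearMap.mulRight k (rh.left j))
          (LinearMap.mulLeft k (antipode k (rh.right j)) ∘ₗ LinearMap.mulRight k h')
          (∑ i ∈ rg.index, ∑ p ∈ (r₁ i).index,
            (r₁ i).left p ⊗ₜ[k] (antipode k ((r₁ i).right p) * rg.right i)) := by
        simp only [diagActU_tmul rg, map_sum, galoisInv_tmul ((r₁ _).mul rh),
          Finset.sum_product, Repr.mul_left, Repr.mul_right, Repr.mul_index]
        rw [Finset.sum_comm]
        refine Finset.sum_congr rfl fun i _ => ?_
        rw [Finset.sum_comm]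
        refine Finset.sum_congr rfl fun j _ => Finset.sum_congr rfl fun p _ => ?_
        simp [antipode_mul_antidistrib, mul_assoc]
    _ = _ := by
        rw [sum_tmul_antipode_mul_eq]
        simp [galoisInv_tmul rh]

theorem galoisInv_diagActU (g : H) (x : H ⊗[k] H) :
    galoisInv k H (diagActU comul (g ⊗ₜ x)) =
      (LinearMap.mulLeft k g).rTensor H (galoisInv k H x) := by
  induction x using TensorProduct.induction_on with
  | zero => simp
  | tmul h h' => exact galoisInv_diagActU_tmul g h h'
  | add x y hx hy => simp only [tmul_add, map_add, hx, hy]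

end Hopf

variable {k : Type} [Field k] {H : Type} [Ring H] {M : Type} [AddCommGroup M] [Module k M]

section Action

variable [Algebra k H]

/-- Identifies `M ⊗_H (H ⊗ H)` with `H ⊗ M` when `H` acts on `H ⊗ H` by left multiplication on
the first factor. -/
noncomputable def actLeftFactor (actM : H →ₗ[k] M →ₗ[k] M) :
    M ⊗[k] (H ⊗[k] H) →ₗ[k] H ⊗[k] M :=
  (TensorProduct.comm k M H).toLinearMap ∘ₗ (lift actM.flip).rTensor H ∘ₗ
    (TensorProduct.assoc k M H H).symm.toLinearMap

theorem actLeftFactor_tmul (actM : H →ₗ[k] M →ₗ[k] M) (m : M) (h h' : H) :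
    actLeftFactor actM (m ⊗ₜ (h ⊗ₜ h')) = h' ⊗ₜ actM h m := rfl

theorem actLeftFactor_act {actM : H →ₗ[k] M →ₗ[k] M} (hactM : IsRAct actM) (g : H) (m : M)
    (x : H ⊗[k] H) :
    actLeftFactor actM (actM g m ⊗ₜ x) =
      actLeftFactor actM (m ⊗ₜ (LinearMap.mulLeft k g).rTensor H x) := by
  induction x using TensorProduct.induction_on with
  | zero => simp
  | tmul h h' => simp [actLeftFactor_tmul, hactM.2 g h]
  | add x y hx hy => simp only [tmul_add, map_add, hx, hy]

end Action

variable [HopfAlgebra k H]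

noncomputable def balancedMap (actM : H →ₗ[k] M →ₗ[k] M) : M ⊗[k] (H ⊗[k] H) →ₗ[k] H ⊗[k] M :=
  actLeftFactor actM ∘ₗ (galoisInv k H).lTensor M

theorem balancedMap_tmul (actM : H →ₗ[k] M →ₗ[k] M) (m : M) {ι : Type*} {g : H}
    (r : Repr k g ι) (g' : H) :
    balancedMap actM (m ⊗ₜ (g ⊗ₜ g')) =
      ∑ i ∈ r.index, (antipode k (r.right i) * g') ⊗ₜ actM (r.left i) m := by
  simp [balancedMap, galoisInv_tmul r, tmul_sum, actLeftFactor_tmul]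

theorem balancedMap_one_tmul {actM : H →ₗ[k] M →ₗ[k] M} (hactM : IsRAct actM) (m : M) (g : H) :
    balancedMap actM (m ⊗ₜ ((1 : H) ⊗ₜ g)) = g ⊗ₜ m := by
  simp [balancedMap, galoisInv, Algebra.TensorProduct.one_def, actLeftFactor_tmul, hactM.1]

theorem rel2_le_ker_balancedMap {actM : H →ₗ[k] M →ₗ[k] M} (hactM : IsRAct actM) :
    rel2 comul actM ≤ LinearMap.ker (balancedMap actM) := by
  refine Submodule.span_le.mpr ?_
  rintro _ ⟨g, m, x, rfl⟩
  simp [balancedMap, actLeftFactor_act hactM, galoisInv_diagActU]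

end HC

theorem stmt18_general {k : Type} [Field k] {H : Type} [Ring H] [HopfAlgebra k H]
    {M : Type} [AddCommGroup M] [Module k M]
    (actM : H →ₗ[k] M →ₗ[k] M) (coactM : M →ₗ[k] H ⊗[k] M)
    (hactM : IsRAct actM)
    (hyp : ∀ (h : H) (m : M) (s : Finset ℕ) (a b : ℕ → H)
        (u : Finset ℕ) (e : ℕ → H) (m0 : ℕ → M)
        (u' : Finset ℕ) (e' : ℕ → H) (m0' : ℕ → M),
      Coalgebra.comul (R := k) h = ∑ i ∈ s, a i ⊗ₜ b i →
      coactM m = ∑ l ∈ u, e l ⊗ₜ m0 l →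
      coactM (actM h m) = ∑ r ∈ u', e' r ⊗ₜ m0' r →
      (∑ i ∈ s, ∑ l ∈ u, m0 l ⊗ₜ (b i ⊗ₜ (e l * a i))) -
          (∑ r ∈ u', m0' r ⊗ₜ ((1 : H) ⊗ₜ e' r)) ∈
        rel2 (Coalgebra.comul (R := k)) actM) :
    AYDrl (Coalgebra.comul (R := k)) (HopfAlgebra.antipode (R := k))
      actM coactM := by
  intro h m s a b t c d u e m0 hΔh hΔb hm
  obtain ⟨n, e', m0', hmh⟩ := exists_eq_sum_range_tmul (coactM (actM h m))
  have hbal := rel2_le_ker_balancedMap hactM (hyp h m s a b u e m0 _ e' m0' hΔh hm hmh)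
  rw [LinearMap.mem_ker, map_sub, sub_eq_zero] at hbal
  rw [hmh, ← Finset.sum_congr rfl fun r _ => balancedMap_one_tmul hactM (m0' r) (e' r),
    ← map_sum, ← hbal, map_sum]
  refine Finset.sum_congr rfl fun i hi => ?_
  simp only [map_sum, balancedMap_tmul _ _ ⟨t i, c i, d i, (hΔb i hi).symm⟩, mul_assoc]
  exact Finset.sum_comm

/-- If the identity
`m⁽⁰⁾ ⊗_H (h⁽²⁾ ⊗ m⁽⁻¹⁾h⁽¹⁾) = (mh)⁽⁰⁾ ⊗_H (1 ⊗ (mh)⁽⁻¹⁾)` holds in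
`M ⊗_H (H ⊗ H)` for all `m ∈ M`, `h ∈ H`, then `M` satisfies the right-left
anti-Yetter-Drinfeld condition. -/
theorem stmt18 {k : Type} [Field k] {H : Type} [Ring H] [HopfAlgebra k H]
    (Sinv : H →ₗ[k] H)
    (hS : ∀ h : H, Sinv (HopfAlgebra.antipode (R := k) h) = h)
    (hS' : ∀ h : H, HopfAlgebra.antipode (R := k) (Sinv h) = h)
    {M : Type} [AddCommGroup M] [Module k M]
    (actM : H →ₗ[k] M →ₗ[k] M) (coactM : M →ₗ[k] H ⊗[k] M)
    (hactM : IsRAct actM)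
    (hcoactM : IsLCoact (Coalgebra.comul (R := k)) (Coalgebra.counit (R := k)) coactM)
    (hyp : ∀ (h : H) (m : M) (s : Finset ℕ) (a b : ℕ → H)
        (u : Finset ℕ) (e : ℕ → H) (m0 : ℕ → M)
        (u' : Finset ℕ) (e' : ℕ → H) (m0' : ℕ → M),
      Coalgebra.comul (R := k) h = ∑ i ∈ s, a i ⊗ₜ b i →
      coactM m = ∑ l ∈ u, e l ⊗ₜ m0 l →
      coactM (actM h m) = ∑ r ∈ u', e' r ⊗ₜ m0' r →
      (∑ i ∈ s, ∑ l ∈ u, m0 l ⊗ₜ (b i ⊗ₜ (e l * a i))) -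
          (∑ r ∈ u', m0' r ⊗ₜ ((1 : H) ⊗ₜ e' r)) ∈
        rel2 (Coalgebra.comul (R := k)) actM) :
    AYDrl (Coalgebra.comul (R := k)) (HopfAlgebra.antipode (R := k))
      actM coactM :=
  stmt18_general actM coactM hactM hyp
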